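/- arXiv:1002.0038 — 2 statements merged into one kernel-verified Lean document; each statement's English description precedes it below -/
import Mathlib

section
/- Let h : (0,∞)² → ℝ be continuous and piecewise generalized polynomial with pieces A_1, …, A_l. Then each A_i is closed in (0,∞)², and ∪_{i=1}^l A_i° = (0,∞)² \ ∪_{1≤i<j≤l}( cl(A_i°) ∩ cl(A_j°) ), where interiors ° and closures cl are taken in (0,∞)². -/
open Set

noncomputable section

/-- The open positive quadrant `(0,∞)²`, as a subtype of `ℝ × ℝ`. -/
abbrev PQ : Type := {p : ℝ × ℝ // 0 < p.1 ∧ 0 < p.2}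

/-- A generalized polynomial function (signomial) of two variables: a finite sum
`∑ cᵢ x^{αᵢ₁} y^{αᵢ₂}` with nonzero real coefficients and distinct real exponent pairs. -/
def IsGenPoly (a : PQ → ℝ) : Prop :=
  ∃ (m : ℕ) (c : Fin m → ℝ) (α : Fin m → ℝ × ℝ),
    (∀ i, c i ≠ 0) ∧ Function.Injective α ∧
    ∀ p : PQ, a p = ∑ i, c i * p.1.1 ^ (α i).1 * p.1.2 ^ (α i).2

/-- A basic generalized semialgebraic (semisignomial) subset of `(0,∞)²`. -/
def IsBasicGSA (S : Set PQ) : Prop :=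
  ∃ (f : PQ → ℝ) (K : ℕ) (g : Fin K → PQ → ℝ),
    IsGenPoly f ∧ (∀ k, IsGenPoly (g k)) ∧
    S = {p : PQ | f p = 0 ∧ ∀ k, 0 < g k p}

/-- A generalized semialgebraic set: a finite union of basic ones. -/
def IsGSA (S : Set PQ) : Prop :=
  ∃ (J : ℕ) (T : Fin J → Set PQ), (∀ j, IsBasicGSA (T j)) ∧ S = ⋃ j, T j

/-- `h` is piecewise generalized polynomial: there are finitely many *distinct*
generalized polynomial functions `g i` whose agreement sets with `h` are
generalized semialgebraic and cover `(0,∞)²`. -/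
def IsPiecewiseGenPoly (h : PQ → ℝ) : Prop :=
  ∃ (l : ℕ) (g : Fin l → PQ → ℝ),
    (∀ i, IsGenPoly (g i)) ∧ Function.Injective g ∧
    (∀ i, IsGSA {p : PQ | h p = g i p}) ∧
    ∀ p : PQ, ∃ i, h p = g i p

/-- `h` is a pointwise sup of infs of finitely many generalized polynomial functions. -/
def IsSupInf (h : PQ → ℝ) : Prop :=
  ∃ (J : ℕ) (K : Fin (J + 1) → ℕ)
    (f : (j : Fin (J + 1)) → Fin (K j + 1) → PQ → ℝ),
    (∀ j k, IsGenPoly (f j k)) ∧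
    ∀ p : PQ, h p = ⨆ j, ⨅ k, f j k p

lemma analyticAt_rlog {x : ℝ} (hx : 0 < x) : AnalyticAt ℝ Real.log x := by
  have h0 : AnalyticAt ℂ Complex.log (x : ℂ) :=
    analyticAt_clog (Complex.ofReal_mem_slitPlane.mpr hx)
  have h1 : AnalyticAt ℝ (fun t : ℝ => (Complex.log (t : ℂ)).re) x :=
    (Complex.reCLM.analyticAt _).comp
      ((h0.restrictScalars).comp (Complex.ofRealCLM.analyticAt x))
  have : Real.log = fun t : ℝ => (Complex.log (t : ℂ)).re :=
    funext fun t => (Complex.log_ofReal_re t).symm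
  rw [this]; exact h1

lemma genPoly_continuous {a : PQ → ℝ} (ha : IsGenPoly a) : Continuous a := by
  obtain ⟨m, c, α, -, -, hrep⟩ := ha
  have : a = fun p : PQ => ∑ i, c i * p.1.1 ^ (α i).1 * p.1.2 ^ (α i).2 := funext hrep
  rw [this]
  apply continuous_finset_sum
  intro i _
  rw [continuous_iff_continuousAt]
  intro p
  have h1 : ContinuousAt (fun p : PQ => (p : ℝ × ℝ).1 ^ (α i).1) p :=
    continuous_subtype_val.fst.continuousAt.rpow_const (Or.inl p.2.1.ne')
  have h2 : ContinuousAt (fun p : PQ => (p : ℝ × ℝ).2 ^ (α i).2) p :=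
    continuous_subtype_val.snd.continuousAt.rpow_const (Or.inl p.2.2.ne')
  exact (continuousAt_const.mul h1).mul h2

def expPoly (k : ℕ) (e : Fin k → ℝ) (γ : Fin k → ℝ × ℝ) : ℝ × ℝ → ℝ :=
  fun q => ∑ i, e i * Real.exp (Real.log q.1 * (γ i).1) * Real.exp (Real.log q.2 * (γ i).2)

lemma expPoly_analytic (k : ℕ) (e : Fin k → ℝ) (γ : Fin k → ℝ × ℝ) :
    AnalyticOnNhd ℝ (expPoly k e γ) (Ioi (0:ℝ) ×ˢ Ioi (0:ℝ)) := by
  intro q hq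
  rw [Set.mem_prod] at hq
  apply Finset.analyticAt_fun_sum
  intro i _
  have h1 : AnalyticAt ℝ (fun q : ℝ × ℝ => Real.log q.1) q :=
    (analyticAt_rlog hq.1).comp ((ContinuousLinearMap.fst ℝ ℝ ℝ).analyticAt q)
  have h2 : AnalyticAt ℝ (fun q : ℝ × ℝ => Real.log q.2) q :=
    (analyticAt_rlog hq.2).comp ((ContinuousLinearMap.snd ℝ ℝ ℝ).analyticAt q)
  exact (analyticAt_const.mul ((h1.mul analyticAt_const).rexp)).mul
    ((h2.mul analyticAt_const).rexp)

lemma expPoly_eq_genPoly {a : PQ → ℝ} (k : ℕ) (e : Fin k → ℝ) (γ : Fin k → ℝ × ℝ)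
    (hra : ∀ p : PQ, a p = ∑ i, e i * p.1.1 ^ (γ i).1 * p.1.2 ^ (γ i).2) (p : PQ) :
    a p = expPoly k e γ (p : ℝ × ℝ) := by
  rw [hra, expPoly]
  exact Finset.sum_congr rfl fun i _ => by
    rw [Real.rpow_def_of_pos p.2.1, Real.rpow_def_of_pos p.2.2]

lemma genPoly_eq_of_eqOn_open {a b : PQ → ℝ} (ha : IsGenPoly a) (hb : IsGenPoly b)
    {S : Set PQ} (hS : IsOpen S) (hne : S.Nonempty) (heq : EqOn a b S) : a = b := by
  obtain ⟨m, c, α, -, -, hra⟩ := ha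
  obtain ⟨n, d, β, -, -, hrb⟩ := hb
  have hQopen : IsOpen (Ioi (0:ℝ) ×ˢ Ioi (0:ℝ)) := isOpen_Ioi.prod isOpen_Ioi
  have hQconn : IsPreconnected (Ioi (0:ℝ) ×ˢ Ioi (0:ℝ)) :=
    ((convex_Ioi (0:ℝ)).prod (convex_Ioi (0:ℝ))).isPreconnected
  obtain ⟨p₀, hp₀⟩ := hne
  obtain ⟨V, hVopen, hVeq⟩ := isOpen_induced_iff.mp hS
  have hz₀Q : (p₀ : ℝ × ℝ) ∈ Ioi (0:ℝ) ×ˢ Ioi (0:ℝ) := Set.mem_prod.mpr ⟨p₀.2.1, p₀.2.2⟩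
  have hp₀V : (p₀ : ℝ × ℝ) ∈ V := by rw [← hVeq] at hp₀; exact hp₀
  have hev : expPoly m c α =ᶠ[nhds (p₀ : ℝ × ℝ)] expPoly n d β := by
    have hmem : V ∩ (Ioi (0:ℝ) ×ˢ Ioi (0:ℝ)) ∈ nhds (p₀ : ℝ × ℝ) :=
      (hVopen.inter hQopen).mem_nhds ⟨hp₀V, hz₀Q⟩
    filter_upwards [hmem] with q hq
    have hqQ : 0 < q.1 ∧ 0 < q.2 := Set.mem_prod.mp hq.2
    have hqS : (⟨q, hqQ⟩ : PQ) ∈ S := by rw [← hVeq]; exact hq.1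
    have e1 : a ⟨q, hqQ⟩ = expPoly m c α q := expPoly_eq_genPoly m c α hra ⟨q, hqQ⟩
    have e2 : a ⟨q, hqQ⟩ = b ⟨q, hqQ⟩ := heq hqS
    have e3 : b ⟨q, hqQ⟩ = expPoly n d β q := expPoly_eq_genPoly n d β hrb ⟨q, hqQ⟩
    rw [← e1, ← e3, e2]
  have heqQ : EqOn (expPoly m c α) (expPoly n d β) (Ioi (0:ℝ) ×ˢ Ioi (0:ℝ)) :=
    (expPoly_analytic m c α).eqOn_of_preconnected_of_eventuallyEq (expPoly_analytic n d β)
      hQconn hz₀Q hev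
  funext p
  rw [expPoly_eq_genPoly m c α hra p, expPoly_eq_genPoly n d β hrb p]
  exact heqQ (Set.mem_prod.mpr ⟨p.2.1, p.2.2⟩)


/-- For a continuous piecewise generalized polynomial function, each piece is
closed in `(0,∞)²`, and the union of the interiors of the pieces is the
complement of the union of the pairwise intersections of the closures of the
interiors of the pieces. -/
theorem pieces_closed_and_interior_union_eq (h : PQ → ℝ) (hc : Continuous h)
    (l : ℕ) (g : Fin l → PQ → ℝ)
    (hg : ∀ i, IsGenPoly (g i)) (hginj : Function.Injective g)
    (A : Fin l → Set PQ) (hA : ∀ i, A i = {p : PQ | h p = g i p})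
    (hGSA : ∀ i, IsGSA (A i)) (hcover : ∀ p : PQ, ∃ i, p ∈ A i) :
    (∀ i, IsClosed (A i)) ∧
    (⋃ i, interior (A i)) =
      univ \ ⋃ (i : Fin l) (j : Fin l) (_ : i < j),
        closure (interior (A i)) ∩ closure (interior (A j)) := by
  have hclosed : ∀ i, IsClosed (A i) := fun i => by
    rw [hA i]; exact isClosed_eq hc (genPoly_continuous (hg i))
  refine ⟨hclosed, ?_⟩
  -- A Baire space structure on PQ
  have hQopen : IsOpen {p : ℝ × ℝ | 0 < p.1 ∧ 0 < p.2} :=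
    (isOpen_lt continuous_const continuous_fst).inter (isOpen_lt continuous_const continuous_snd)
  haveI : LocallyCompactSpace PQ := hQopen.locallyCompactSpace
  have hcover' : ⋃ i, A i = univ := eq_univ_of_forall fun p => mem_iUnion.mpr (hcover p)
  have hdense : Dense (⋃ i, interior (A i)) := dense_iUnion_interior_of_closed hclosed hcover'
  -- key disjointness fact
  have hkey : ∀ i j : Fin l, i ≠ j → ∀ p : PQ,
      p ∈ interior (A i) → p ∉ closure (interior (A j)) := by
    intro i j hij p hpi hpj
    obtain ⟨q, hq1, hq2⟩ :=
      mem_closure_iff.mp hpj (interior (A i)) isOpen_interior hpi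
    have hSopen : IsOpen (interior (A i) ∩ interior (A j)) :=
      isOpen_interior.inter isOpen_interior
    have heqgij : g i = g j := by
      refine genPoly_eq_of_eqOn_open (hg i) (hg j) hSopen ⟨q, hq1, hq2⟩ ?_
      rintro r ⟨hr1, hr2⟩
      have h1 : h r = g i r := by
        have := interior_subset hr1; rw [hA i] at this; exact this
      have h2 : h r = g j r := by
        have := interior_subset hr2; rw [hA j] at this; exact this
      rw [← h1, ← h2]
    exact hij (hginj heqgij)
  ext p
  simp only [mem_iUnion, mem_diff, mem_univ, true_and, mem_inter_iff, not_exists]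
  constructor
  · rintro ⟨i, hpi⟩ j k hjk
    rintro ⟨hpj, hpk⟩
    rcases eq_or_ne j i with rfl | hji
    · exact hkey j k hjk.ne p hpi hpk
    · exact hkey i j (Ne.symm hji) p hpi hpj
  · intro hp
    have hmem : p ∈ ⋃ i, closure (interior (A i)) := by
      have h1 : closure (⋃ i, interior (A i)) ⊆ ⋃ i, closure (interior (A i)) :=
        closure_minimal (iUnion_mono fun i => subset_closure)
          (isClosed_iUnion_of_finite fun i => isClosed_closure)
      exact h1 (hdense p)
    obtain ⟨i, hpi⟩ := mem_iUnion.mp hmem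
    have huniq : ∀ j, j ≠ i → p ∉ closure (interior (A j)) := by
      intro j hj hpj
      rcases lt_or_gt_of_ne hj with hlt | hlt
      · exact hp j i hlt ⟨hpj, hpi⟩
      · exact hp i j hlt ⟨hpi, hpj⟩
    set C : Set PQ := ⋃ j ∈ {j : Fin l | j ≠ i}, closure (interior (A j)) with hC
    have hCclosed : IsClosed C :=
      Set.Finite.isClosed_biUnion (toFinite _) fun j _ => isClosed_closure
    have hpU : p ∈ Cᶜ := by
      intro hpc
      obtain ⟨j, hj, hpj⟩ := mem_iUnion₂.mp hpc
      exact huniq j hj hpj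
    have hUsub : Cᶜ ⊆ A i := by
      intro x hx
      have hxcl : x ∈ closure (interior (A i)) := by
        rw [mem_closure_iff]
        intro O hO hxO
        obtain ⟨r, hr1, hr2⟩ := mem_closure_iff.mp (hdense x) (O ∩ Cᶜ)
          (hO.inter hCclosed.isOpen_compl) ⟨hxO, hx⟩
        obtain ⟨j, hrj⟩ := mem_iUnion.mp hr2
        have hji : j = i := by
          by_contra hne
          exact hr1.2 (mem_iUnion₂.mpr ⟨j, hne, subset_closure hrj⟩)
        exact ⟨r, hr1.1, hji ▸ hrj⟩
      exact closure_minimal interior_subset (hclosed i) hxcl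
    exact ⟨i, interior_maximal hUsub hCclosed.isOpen_compl hpU⟩
end
end

section
/- Let X be a set and S a subring of the ring ℝ^X of all real-valued functions on X (with pointwise operations). Then the smallest sublattice of ℝ^X (under pointwise maximum and minimum) containing S is also a subring of ℝ^X; equivalently, the set of functions of the form max_{1≤j≤J} min_{1≤k≤K_j} f_{jk} with all f_{jk} ∈ S is closed under subtraction and multiplication. -/
/-!
Since `X → ℝ` is a distributive lattice, the sup-infs of members of `S` form exactly the sublattice
`L` generated by `S`. A map of `X → ℝ` that preserves (or swaps) `⊔` and `⊓` and sends `S` into `L`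
sends all of `L` into `L`. Translations by elements of `S` and negation are such maps, so `L` is an
additive group. For products write `a * b` through `a⁺, a⁻, b⁺, b⁻`: for `p ≥ 0` the map
`a ↦ a⁺ * p` preserves `⊔` and `⊓`, so applying the closure argument once in each factor reduces
`a⁺ * b⁺ ∈ L` to `s⁺ * t⁺ ∈ L` for `s, t ∈ S`, which holds because
`s⁺ * t⁺ = 0 ⊔ (s * t ⊓ (s + t) * (1 + s * t))`.
-/

noncomputable section

/-- `h` is a pointwise sup of infs of finitely many members of `S`. -/
def IsSupInfOf {X : Type*} (S : Set (X → ℝ)) (h : X → ℝ) : Prop :=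
  ∃ (J : ℕ) (K : Fin (J + 1) → ℕ)
    (f : (j : Fin (J + 1)) → Fin (K j + 1) → X → ℝ),
    (∀ j k, f j k ∈ S) ∧ ∀ x : X, h x = ⨆ j, ⨅ k, f j k x

open Set Finset

section Reindexing

variable {α : Type*}

theorem Finset.exists_fin_succ_sup'_eq [SemilatticeSup α] (s : Finset α) (hs : s.Nonempty) :
    ∃ (n : ℕ) (g : Fin (n + 1) → α), (∀ i, g i ∈ s) ∧ univ.sup' univ_nonempty g = s.sup' hs id := by
  obtain ⟨n, hn⟩ := Nat.exists_eq_succ_of_ne_zero hs.card_pos.ne'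
  let e := (s.equivFinOfCardEq hn).symm
  refine ⟨n, fun i => e i, fun i => (e i).2, le_antisymm ?_ ?_⟩
  · exact Finset.sup'_le _ _ fun i _ => Finset.le_sup' id (e i).2
  · refine Finset.sup'_le _ _ fun a ha => ?_
    simpa using Finset.le_sup' (fun i => (e i : α)) (Finset.mem_univ (e.symm ⟨a, ha⟩))

theorem Finset.exists_fin_succ_inf'_eq [SemilatticeInf α] (s : Finset α) (hs : s.Nonempty) :
    ∃ (n : ℕ) (g : Fin (n + 1) → α), (∀ i, g i ∈ s) ∧ univ.inf' univ_nonempty g = s.inf' hs id :=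
  Finset.exists_fin_succ_sup'_eq (α := αᵒᵈ) s hs

end Reindexing

theorem isSupInfOf_iff_mem_latticeClosure {X : Type*} (S : Set (X → ℝ)) (h : X → ℝ) :
    IsSupInfOf S h ↔ h ∈ latticeClosure S := by
  constructor
  · rintro ⟨J, K, f, hf, hh⟩
    have : h = univ.sup' univ_nonempty fun j => univ.inf' univ_nonempty (f j) := by
      funext x
      simp only [hh, Finset.sup'_apply, Finset.inf'_apply]
      simp only [sup'_univ_eq_ciSup, inf'_univ_eq_ciInf]
    rw [this]
    exact isSublattice_latticeClosure.supClosed.finsetSup'_mem _ fun j _ =>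
      isSublattice_latticeClosure.infClosed.finsetInf'_mem _ fun k _ =>
        subset_latticeClosure (hf j k)
  · rw [← supClosure_infClosure]
    rintro ⟨t, ht, htS, rfl⟩
    obtain ⟨J, g, hgt, hg⟩ := t.exists_fin_succ_sup'_eq ht
    choose u hu huS hug using fun j => htS (hgt j)
    choose K f hfu hf using fun j => (u j).exists_fin_succ_inf'_eq (hu j)
    refine ⟨J, K, f, fun j k => huS j (hfu j k), fun x => ?_⟩
    rw [← hg, Finset.sup'_apply, sup'_univ_eq_ciSup]
    refine iSup_congr fun j => ?_
    rw [← hug, ← hf, Finset.inf'_apply, inf'_univ_eq_ciInf]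

section LatticeClosure

variable {α β : Type*} [Lattice α] [Lattice β] {s : Set α} {t : Set β} {f : α → β}

theorem mapsTo_latticeClosure (map_sup : ∀ a b, f (a ⊔ b) = f a ⊔ f b)
    (map_inf : ∀ a b, f (a ⊓ b) = f a ⊓ f b) (h : MapsTo f s (latticeClosure t)) :
    MapsTo f (latticeClosure s) (latticeClosure t) := by
  rw [mapsTo_iff_image_subset, image_latticeClosure s f map_sup map_inf] at *
  exact latticeClosure_min h isSublattice_latticeClosure

theorem mapsTo_latticeClosure' (map_sup : ∀ a b, f (a ⊔ b) = f a ⊓ f b)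
    (map_inf : ∀ a b, f (a ⊓ b) = f a ⊔ f b) (h : MapsTo f s (latticeClosure t)) :
    MapsTo f (latticeClosure s) (latticeClosure t) := by
  rw [mapsTo_iff_image_subset, image_latticeClosure' s f map_sup map_inf] at *
  exact latticeClosure_min h isSublattice_latticeClosure

end LatticeClosure

def AddSubgroup.latticeClosure {α : Type*} [Lattice α] [AddGroup α] [AddLeftMono α]
    [AddRightMono α] (G : AddSubgroup α) : AddSubgroup α where
  carrier := _root_.latticeClosure G
  zero_mem' := subset_latticeClosure G.zero_mem
  neg_mem' ha := mapsTo_latticeClosure' (f := Neg.neg) neg_sup neg_inf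
    (fun _ hg => subset_latticeClosure (G.neg_mem hg)) ha
  add_mem' {_ b} ha hb := mapsTo_latticeClosure (f := (· + b)) (sup_add · · b) (inf_add · · b)
    (fun g hg => mapsTo_latticeClosure (f := (g + ·)) (add_sup · · g) (add_inf · · g)
      (fun _ hc => subset_latticeClosure (G.add_mem hg hc)) hb) ha

section PosPart

variable {X R : Type*} [CommRing R] [LinearOrder R] [IsStrictOrderedRing R]

/- For `s, t ≥ 0`, `(s + t) * (1 + s * t) ≥ s * (1 + t ^ 2) ≥ 2 * s * t`;
for `s, t ≤ 0` it is `≤ 0`. -/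
theorem posPart_mul_posPart_eq_sup_inf (s t : R) :
    s⁺ * t⁺ = 0 ⊔ (s * t ⊓ (s + t) * (1 + s * t)) := by
  rcases le_total s 0 with hs | hs <;> rcases le_total t 0 with ht | ht
  · have : (s + t) * (1 + s * t) ≤ 0 :=
      mul_nonpos_of_nonpos_of_nonneg (by linarith) (by nlinarith)
    rw [posPart_eq_zero.2 hs, zero_mul, left_eq_sup]
    exact inf_le_right.trans this
  · rw [posPart_eq_zero.2 hs, zero_mul, left_eq_sup]
    exact inf_le_left.trans (mul_nonpos_of_nonpos_of_nonneg hs ht)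
  · rw [posPart_eq_zero.2 ht, mul_zero, left_eq_sup]
    exact inf_le_left.trans (mul_nonpos_of_nonneg_of_nonpos hs ht)
  · have : s * t ≤ (s + t) * (1 + s * t) := by
      nlinarith [mul_nonneg hs (sq_nonneg (t - 1)), mul_nonneg ht (mul_nonneg hs hs)]
    rw [posPart_eq_self.2 hs, posPart_eq_self.2 ht, inf_eq_left.2 this,
      sup_eq_right.2 (mul_nonneg hs ht)]

theorem posPart_sup_mul {p : X → R} (hp : 0 ≤ p) (a b : X → R) :
    (a ⊔ b)⁺ * p = a⁺ * p ⊔ b⁺ * p := by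
  funext x
  exact Monotone.map_max fun _ _ h => mul_le_mul_of_nonneg_right (posPart_mono h) (hp x)

theorem posPart_inf_mul {p : X → R} (hp : 0 ≤ p) (a b : X → R) :
    (a ⊓ b)⁺ * p = a⁺ * p ⊓ b⁺ * p := by
  funext x
  exact Monotone.map_min fun _ _ h => mul_le_mul_of_nonneg_right (posPart_mono h) (hp x)

theorem posPart_mul_posPart_mem_latticeClosure (S : Subring (X → R)) {a b : X → R}
    (ha : a ∈ latticeClosure (S : Set (X → R))) (hb : b ∈ latticeClosure (S : Set (X → R))) :
    a⁺ * b⁺ ∈ latticeClosure (S : Set (X → R)) := by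
  set L := latticeClosure (S : Set (X → R))
  have hL : IsSublattice L := isSublattice_latticeClosure
  have of_mem : ∀ s ∈ S, ∀ t ∈ S, s⁺ * t⁺ ∈ L := fun s hs t ht => by
    rw [show s⁺ * t⁺ = 0 ⊔ (s * t ⊓ (s + t) * (1 + s * t)) from
      funext fun x => posPart_mul_posPart_eq_sup_inf (s x) (t x)]
    refine hL.supClosed (subset_latticeClosure S.zero_mem)
      (hL.infClosed (subset_latticeClosure (S.mul_mem hs ht)) (subset_latticeClosure ?_))
    exact S.mul_mem (S.add_mem hs ht) (S.add_mem S.one_mem (S.mul_mem hs ht))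
  have mapsTo_posPart_mul {p : X → R} (hp : 0 ≤ p) (h : MapsTo (·⁺ * p) (S : Set (X → R)) L) :
      MapsTo (·⁺ * p) L L :=
    mapsTo_latticeClosure (posPart_sup_mul hp) (posPart_inf_mul hp) h
  have of_mem_right : ∀ t ∈ S, b⁺ * t⁺ ∈ L := fun t ht =>
    mapsTo_posPart_mul (posPart_nonneg t) (fun s hs => of_mem s hs t ht) hb
  exact mapsTo_posPart_mul (posPart_nonneg b)
    (fun t ht => show t⁺ * b⁺ ∈ L from mul_comm b⁺ t⁺ ▸ of_mem_right t ht) ha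

theorem mul_mem_latticeClosure (S : Subring (X → R)) {a b : X → R}
    (ha : a ∈ latticeClosure (S : Set (X → R))) (hb : b ∈ latticeClosure (S : Set (X → R))) :
    a * b ∈ latticeClosure (S : Set (X → R)) := by
  let L := S.toAddSubgroup.latticeClosure
  have hpos {c d : X → R} : c ∈ L → d ∈ L → c⁺ * d⁺ ∈ L :=
    posPart_mul_posPart_mem_latticeClosure S
  have expand : a * b = a⁺ * b⁺ - a⁺ * (-b)⁺ - (-a)⁺ * b⁺ + (-a)⁺ * (-b)⁺ := by
    rw [posPart_neg, posPart_neg]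
    conv_lhs => rw [← posPart_sub_negPart a, ← posPart_sub_negPart b]
    ring
  rw [expand]
  exact L.add_mem (L.sub_mem (L.sub_mem (hpos ha hb) (hpos ha (L.neg_mem hb)))
    (hpos (L.neg_mem ha) hb)) (hpos (L.neg_mem ha) (L.neg_mem hb))

end PosPart

def Subring.latticeClosure {X R : Type*} [CommRing R] [LinearOrder R] [IsStrictOrderedRing R]
    (S : Subring (X → R)) : Subring (X → R) :=
  { S.toAddSubgroup.latticeClosure with
    one_mem' := subset_latticeClosure S.one_mem
    mul_mem' := mul_mem_latticeClosure S }

/-- Henriksen–Isbell: if `S` is a subring of the ring `ℝ^X` of all real-valued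
functions on a set `X`, then the smallest sublattice of `ℝ^X` containing `S`
(i.e. the set of functions `max_j min_k f_{jk}` with all `f_{jk} ∈ S`) is closed
under subtraction and multiplication, hence is itself a subring of `ℝ^X`. -/
theorem supInf_of_subring_closed_under_sub_mul
    (X : Type*) (S : Subring (X → ℝ)) (h₁ h₂ : X → ℝ)
    (hh₁ : IsSupInfOf (S : Set (X → ℝ)) h₁)
    (hh₂ : IsSupInfOf (S : Set (X → ℝ)) h₂) :
    IsSupInfOf (S : Set (X → ℝ)) (h₁ - h₂) ∧
    IsSupInfOf (S : Set (X → ℝ)) (h₁ * h₂) := by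
  simp only [isSupInfOf_iff_mem_latticeClosure] at hh₁ hh₂ ⊢
  exact ⟨S.latticeClosure.sub_mem hh₁ hh₂, S.latticeClosure.mul_mem hh₁ hh₂⟩
end
end
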